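/- In a homogeneously self-similar graph, the diameter of the boundary of an n-cell is exactly ν^n. -/

import Mathlib

variable {V : Type*}

/-- `C` is a cell w.r.t. `F`: a connected component of `V X ∖ F`. -/
def IsCellOf (G : SimpleGraph V) (F : Set V) (C : Set V) : Prop :=
  C.Nonempty ∧ C ⊆ Fᶜ ∧ (G.induce C).Preconnected ∧
    ∀ D : Set V, C ⊆ D → D ⊆ Fᶜ → (G.induce D).Preconnected → D = C

/-- vertex boundary θC -/
def vBoundary (G : SimpleGraph V) (C : Set V) : Set V :=
  {v | v ∉ C ∧ ∃ c ∈ C, G.Adj v c}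

/-- closure of a set of vertices -/
def vClosure (G : SimpleGraph V) (C : Set V) : Set V := C ∪ vBoundary G C

/-- edge boundary δC -/
def eBoundary (G : SimpleGraph V) (C : Set V) : Set (Sym2 V) :=
  {e | ∃ x y, G.Adj x y ∧ e = s(x, y) ∧ x ∈ C ∧ y ∉ C}

/-- edges of the cell graph Ĉ (subgraph spanned by the closure of C) -/
def cellEdges (G : SimpleGraph V) (C : Set V) : Set (Sym2 V) :=
  {e | ∃ x y, G.Adj x y ∧ e = s(x, y) ∧ x ∈ vClosure G C ∧ y ∈ vClosure G C}

/-- the reduced graph X_F -/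
def reducedGraph (G : SimpleGraph V) (F : Set V) : SimpleGraph F where
  Adj x y := x ≠ y ∧ ∃ C : Set V, IsCellOf G F C ∧
    (x : V) ∈ vBoundary G C ∧ (y : V) ∈ vBoundary G C
  symm := by
    refine ⟨?_⟩
    rintro x y ⟨hxy, C, hC, hx, hy⟩
    exact ⟨hxy.symm, C, hC, hy, hx⟩
  loopless := by refine ⟨?_⟩; rintro x ⟨hx, -⟩; exact hx rfl

/-- F^n = ψ^n (V X), as a subset of V -/
def Fpow (G : SimpleGraph V) (F : Set V) (ψ : G ≃g reducedGraph G F) : ℕ → Set V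
  | 0 => Set.univ
  | n + 1 => (fun v => ((ψ v : F) : V)) '' Fpow G F ψ n

/-- (F1) no two vertices of F adjacent -/
def AxiomF1 (G : SimpleGraph V) (F : Set V) : Prop :=
  ∀ x ∈ F, ∀ y ∈ F, ¬ G.Adj x y

/-- (F2) closures of distinct cells share at most one vertex -/
def AxiomF2 (G : SimpleGraph V) (F : Set V) : Prop :=
  ∀ C D : Set V, IsCellOf G F C → IsCellOf G F D → C ≠ D →
    (vClosure G C ∩ vClosure G D).Subsingleton

/-- (H1) cell graphs finite, pairwise isomorphic via boundary preserving isomorphisms -/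
def AxiomH1 (G : SimpleGraph V) (F : Set V) : Prop :=
  (∀ C : Set V, IsCellOf G F C → (vClosure G C).Finite) ∧
  ∀ C D : Set V, IsCellOf G F C → IsCellOf G F D →
    ∃ α : G.induce (vClosure G C) ≃g G.induce (vClosure G D),
      ∀ x : vClosure G C, (x : V) ∈ vBoundary G C → ((α x : vClosure G D) : V) ∈ vBoundary G D

/-- (H2) any two distinct boundary vertices of a cell are at distance ν -/
def AxiomH2 (G : SimpleGraph V) (F : Set V) (ν : ℕ) : Prop :=
  ∀ C : Set V, IsCellOf G F C → ∀ x ∈ vBoundary G C, ∀ y ∈ vBoundary G C,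
    x ≠ y → G.dist x y = ν

/-- constant inner degree `b` : every boundary vertex of every cell has degree b in the cell graph -/
def ConstInnerDegree (G : SimpleGraph V) (F : Set V) (b : ℕ) : Prop :=
  ∀ C : Set V, IsCellOf G F C → ∀ v ∈ vBoundary G C,
    {u ∈ vClosure G C | G.Adj v u}.ncard = b

/-- bounded geometry: vertex degrees uniformly bounded -/
def BoundedGeometry (G : SimpleGraph V) : Prop :=
  ∃ M : ℕ, ∀ v : V, (G.neighborSet v).Finite ∧ (G.neighborSet v).ncard ≤ M

/-- volume of a set of vertices -/
noncomputable def volOf (G : SimpleGraph V) (A : Set V) : ℕ :=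
  ∑ᶠ v ∈ A, (G.neighborSet v).ncard

/-- growth function -/
noncomputable def Vfun (G : SimpleGraph V) (x : V) (r : ℕ) : ℕ :=
  volOf G {y | G.dist x y ≤ r}

/-!
Write `f v = ψ v ∈ F`. A walk between two vertices of `F` crosses a cell between consecutive
visits to `F` (there are no edges inside `F`), and each crossing joins two boundary vertices of a
cell, so costs at least `ν` by (H2); hence `d(f a, f b) = ν · d(a, b)`. For `n ≥ 1` the set
`F^{n+1} = f(F^n)` has no reduced edges, which forces every boundary vertex of an `(n+1)`-cell `D`
to be joined in the reduced graph to a vertex of `D ∩ F`. So `D ∩ F` is a cell of `F^{n+1}` in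
the reduced graph whose boundary contains `θD`, and pulling it back along `ψ` gives an `n`-cell
whose boundary contains `f⁻¹(θD)`; induction on `n` finishes.
-/

open SimpleGraph

section Cells

variable {G : SimpleGraph V} {S C T : Set V}

theorem subset_of_induce_preconnected (hT : (G.induce T).Preconnected) (hTC : (T ∩ C).Nonempty)
    (hclosed : ∀ a ∈ C, ∀ b ∈ T, G.Adj a b → b ∈ C) : T ⊆ C := by
  obtain ⟨c, hcT, hcC⟩ := hTC
  intro t htT
  by_contra htC
  obtain ⟨p⟩ := hT ⟨c, hcT⟩ ⟨t, htT⟩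
  obtain ⟨d, -, hd₁, hd₂⟩ := p.exists_boundary_dart (Subtype.val ⁻¹' C) hcC htC
  exact hd₂ (hclosed _ hd₁ _ d.snd.2 d.adj)

theorem IsCellOf.mem_of_adj (hC : IsCellOf G S C) {a b : V} (ha : a ∈ C) (hb : b ∉ S)
    (hab : G.Adj a b) : b ∈ C := by
  have hconn : (G.induce (C ∪ {b})).Connected :=
    connected_induce_union hC.2.2.1 (by simp [Preconnected]) ha rfl hab
  rw [← hC.2.2.2 (C ∪ {b}) Set.subset_union_left
    (Set.union_subset hC.2.1 (Set.singleton_subset_iff.2 hb)) hconn.preconnected]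
  exact Or.inr rfl

theorem isCellOf_of_adj_mem (hne : C.Nonempty) (hCS : C ⊆ Sᶜ) (hC : (G.induce C).Preconnected)
    (hclosed : ∀ a ∈ C, ∀ b ∉ S, G.Adj a b → b ∈ C) : IsCellOf G S C :=
  ⟨hne, hCS, hC, fun D hCD hDS hD => (subset_of_induce_preconnected hD
    (by rwa [Set.inter_eq_right.2 hCD]) fun a ha b hb => hclosed a ha b (hDS hb)).antisymm hCD⟩

theorem IsCellOf.subset_of_preconnected (hC : IsCellOf G S C) (hTS : T ⊆ Sᶜ)
    (hT : (G.induce T).Preconnected) (hTC : (T ∩ C).Nonempty) : T ⊆ C :=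
  subset_of_induce_preconnected hT hTC fun _ ha _ hb => hC.mem_of_adj ha (hTS hb)

theorem IsCellOf.vBoundary_subset (hC : IsCellOf G S C) : vBoundary G C ⊆ S := by
  rintro v ⟨hvC, c, hc, hvc⟩
  by_contra hvS
  exact hvC (hC.mem_of_adj hc hvS hvc.symm)

/-- The cell of `v` is the union of all connected sets through `v` avoiding `S`. -/
theorem exists_isCellOf_mem {v : V} (hv : v ∉ S) : ∃ C, IsCellOf G S C ∧ v ∈ C := by
  set 𝒯 := {T : Set V | v ∈ T ∧ T ⊆ Sᶜ ∧ (G.induce T).Connected}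
  have hv𝒯 : {v} ∈ 𝒯 := ⟨rfl, Set.singleton_subset_iff.2 hv, by simp [connected_top]⟩
  refine ⟨⋃₀ 𝒯, ⟨⟨v, {v}, hv𝒯, rfl⟩, Set.sUnion_subset fun T hT => hT.2.1, ?_, ?_⟩,
    {v}, hv𝒯, rfl⟩
  · exact (induce_sUnion_connected_of_pairwise_not_disjoint ⟨_, hv𝒯⟩
      (fun hT hT' => ⟨v, hT.1, hT'.1⟩) fun hT => hT.2.2).preconnected
  · intro D hD hDS hDconn
    have hvD : v ∈ D := hD ⟨{v}, hv𝒯, rfl⟩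
    have hD𝒯 : D ∈ 𝒯 := ⟨hvD, hDS, (connected_iff _).2 ⟨hDconn, ⟨v, hvD⟩⟩⟩
    exact (Set.subset_sUnion_of_mem hD𝒯).antisymm hD

end Cells

section Isomorphisms

variable {W : Type*} {G : SimpleGraph V} {H : SimpleGraph W}

theorem SimpleGraph.Iso.dist_eq (φ : G ≃g H) (u v : V) : H.dist (φ u) (φ v) = G.dist u v := by
  by_cases h : G.Reachable u v
  · apply le_antisymm
    · obtain ⟨p, hp⟩ := h.exists_walk_length_eq_dist
      simpa [hp] using dist_le (p.map φ.toHom)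
    · obtain ⟨p, hp⟩ := ((Iso.reachable_iff (φ := φ)).2 h).exists_walk_length_eq_dist
      simpa [hp] using dist_le (p.map φ.symm.toHom)
  · rw [dist_eq_zero_of_not_reachable h,
      dist_eq_zero_of_not_reachable (mt Iso.reachable_iff.1 h)]

theorem mem_vBoundary_preimage (φ : G ≃g H) {C : Set W} {v : V} :
    v ∈ vBoundary G (φ ⁻¹' C) ↔ φ v ∈ vBoundary H C := by
  refine and_congr Iff.rfl ⟨fun ⟨c, hc, hvc⟩ => ⟨φ c, hc, φ.map_adj_iff.2 hvc⟩, ?_⟩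
  rintro ⟨c, hc, hvc⟩
  exact ⟨φ.symm c, by simpa using hc, by simpa using φ.symm.map_adj_iff.2 hvc⟩

theorem IsCellOf.preimage (φ : G ≃g H) {S C : Set W} (hC : IsCellOf H S C) :
    IsCellOf G (φ ⁻¹' S) (φ ⁻¹' C) :=
  isCellOf_of_adj_mem (hC.1.preimage φ.surjective) (Set.preimage_mono hC.2.1)
    ((φ.induce φ.toEquiv.bijective.bijOn_preimage).preconnected_iff.2 hC.2.2.1)
    fun _ ha _ hb hab => hC.mem_of_adj ha hb (φ.map_adj_iff.2 hab)

end Isomorphisms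

theorem SimpleGraph.Walk.exists_mem_vBoundary_eq_append {G : SimpleGraph V} {C : Set V}
    {w v : V} (p : G.Walk w v) (hw : w ∈ C) (hv : v ∉ C) :
    ∃ z ∈ vBoundary G C, ∃ (p₁ : G.Walk w z) (p₂ : G.Walk z v), p = p₁.append p₂ := by
  induction p with
  | nil => exact absurd hw hv
  | @cons w x v hwx p ih =>
    by_cases hx : x ∈ C
    · obtain ⟨z, hz, p₁, p₂, rfl⟩ := ih hx hv
      exact ⟨z, hz, .cons hwx p₁, p₂, rfl⟩
    · exact ⟨x, ⟨hx, w, hw, hwx.symm⟩, .cons hwx .nil, p, rfl⟩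

section ReducedGraph

variable {G : SimpleGraph V} {F S D : Set V} {ν : ℕ}

theorem AxiomH2.dist_eq_of_adj (hH2 : AxiomH2 G F ν) {a b : F}
    (hab : (reducedGraph G F).Adj a b) : G.dist a b = ν := by
  obtain ⟨hne, C, hC, ha, hb⟩ := hab
  exact hH2 C hC a ha b hb (Subtype.coe_ne_coe.2 hne)

theorem exists_reducedGraph_walk (hF1 : AxiomF1 G F)
    (hν : ∀ a b : F, (reducedGraph G F).Adj a b → ν ≤ G.dist a b)
    {u v : V} (hu : u ∈ F) (hv : v ∈ F) (p : G.Walk u v) :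
    ∃ q : (reducedGraph G F).Walk ⟨u, hu⟩ ⟨v, hv⟩,
      ν * q.length ≤ p.length ∧ ∀ w ∈ q.support, (w : V) ∈ p.support := by
  induction h : p.length using Nat.strong_induction_on generalizing u with
  | _ L ih =>
  cases p with
  | nil => exact ⟨.nil, by simp, by simp⟩
  | @cons _ x _ hux p =>
    obtain ⟨C, hC, hxC⟩ := exists_isCellOf_mem (G := G) fun hx => hF1 u hu x hx hux
    obtain ⟨z, hz, p₁, p₂, rfl⟩ :=
      p.exists_mem_vBoundary_eq_append hxC fun hvC => hC.2.1 hvC hv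
    have hzF : z ∈ F := hC.vBoundary_subset hz
    rw [Walk.length_cons, Walk.length_append] at h
    obtain ⟨q, hq, hqp⟩ := ih p₂.length (by omega) hzF p₂ rfl
    have hqp' : ∀ w ∈ q.support, (w : V) ∈ (Walk.cons hux (p₁.append p₂)).support :=
      fun w hw => by simp [hqp w hw]
    by_cases huz : u = z
    · subst huz
      exact ⟨q, by omega, hqp'⟩
    have huC : u ∈ vBoundary G C := ⟨fun huC => hC.2.1 huC hu, x, hxC, hux⟩
    have hadj : (reducedGraph G F).Adj ⟨u, hu⟩ ⟨z, hzF⟩ :=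
      ⟨fun h => huz (congrArg Subtype.val h), C, hC, huC, hz⟩
    have hνp₁ : ν ≤ p₁.length + 1 :=
      (hν _ _ hadj).trans (by simpa using dist_le (Walk.cons hux p₁))
    refine ⟨.cons hadj q, ?_, ?_⟩
    · rw [Walk.length_cons, mul_add, mul_one]
      omega
    · rw [Walk.support_cons, List.forall_mem_cons]
      exact ⟨Walk.start_mem_support _, hqp'⟩

theorem dist_le_mul_length (hconn : G.Connected) (hH2 : AxiomH2 G F ν) {a b : F}
    (q : (reducedGraph G F).Walk a b) : G.dist a b ≤ ν * q.length := by
  induction q with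
  | nil => simp
  | @cons a c b hac q ih =>
    calc G.dist a b ≤ G.dist a c + G.dist c b := hconn.dist_triangle
      _ ≤ ν + ν * q.length := by rw [hH2.dist_eq_of_adj hac]; omega
      _ = ν * (Walk.cons hac q).length := by rw [Walk.length_cons]; ring

theorem dist_eq_mul_dist_reducedGraph (hconn : G.Connected) (hF1 : AxiomF1 G F)
    (hH2 : AxiomH2 G F ν) (a b : F) : G.dist a b = ν * (reducedGraph G F).dist a b := by
  obtain ⟨p, hp⟩ := hconn.exists_walk_length_eq_dist a b
  obtain ⟨q, hq, -⟩ :=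
    exists_reducedGraph_walk hF1 (fun _ _ h => (hH2.dist_eq_of_adj h).ge) a.2 b.2 p
  apply le_antisymm
  · obtain ⟨r, hr⟩ := q.reachable.exists_walk_length_eq_dist
    exact hr ▸ dist_le_mul_length hconn hH2 r
  · calc ν * (reducedGraph G F).dist a b ≤ ν * q.length := Nat.mul_le_mul_left _ (dist_le q)
      _ ≤ G.dist a b := hp ▸ hq

theorem IsCellOf.toReducedGraph (hF1 : AxiomF1 G F) (hSF : S ⊆ F) (hD : IsCellOf G S D)
    (hne : (Subtype.val ⁻¹' D : Set F).Nonempty) :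
    IsCellOf (reducedGraph G F) (Subtype.val ⁻¹' S) (Subtype.val ⁻¹' D) := by
  refine isCellOf_of_adj_mem hne (Set.preimage_mono hD.2.1) ?_ ?_
  · rintro ⟨a, ha⟩ ⟨b, hb⟩
    obtain ⟨r⟩ := hD.2.2.1 ⟨a, ha⟩ ⟨b, hb⟩
    have hr : ∀ w ∈ (r.map (Embedding.induce D).toHom).support, w ∈ D := by
      simp only [Walk.support_map, List.mem_map]
      rintro _ ⟨w, -, rfl⟩
      exact w.2
    obtain ⟨q, -, hq⟩ := exists_reducedGraph_walk hF1 (ν := 0) (fun _ _ _ => Nat.zero_le _)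
      a.2 b.2 (r.map (Embedding.induce D).toHom)
    exact ⟨q.induce _ fun w hw => hr _ (hq w hw)⟩
  · intro a ha b hb ⟨_, C, hC, haC, hbC⟩
    obtain ⟨-, c, hc, hac⟩ := haC
    obtain ⟨-, c', hc', hbc'⟩ := hbC
    have hFS : Fᶜ ⊆ Sᶜ := Set.compl_subset_compl.2 hSF
    have hCD : C ⊆ D := hD.subset_of_preconnected (hC.2.1.trans hFS) hC.2.2.1
      ⟨c, hc, hD.mem_of_adj ha (hFS (hC.2.1 hc)) hac⟩
    exact hD.mem_of_adj (hCD hc') hb hbc'.symm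

theorem IsCellOf.mem_vBoundary_reducedGraph (hF1 : AxiomF1 G F) (hSF : S ⊆ F)
    (hS : ∀ a b : F, (a : V) ∈ S → (b : V) ∈ S → ¬ (reducedGraph G F).Adj a b)
    (hD : IsCellOf G S D) {x y : F} (hx : (x : V) ∈ vBoundary G D)
    (hy : (y : V) ∈ vBoundary G D) (hxy : x ≠ y) :
    x ∈ vBoundary (reducedGraph G F) (Subtype.val ⁻¹' D) := by
  obtain ⟨hxD, d, hd, hxd⟩ := hx
  obtain ⟨C, hC, hdC⟩ := exists_isCellOf_mem (G := G) fun hdF => hF1 x x.2 d hdF hxd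
  have hCD : C ⊆ D := hD.subset_of_preconnected
    (hC.2.1.trans (Set.compl_subset_compl.2 hSF)) hC.2.2.1 ⟨d, hdC, hd⟩
  have hxC : (x : V) ∈ vBoundary G C := ⟨fun h => hxD (hCD h), d, hdC, hxd⟩
  -- If `θC ⊆ S`, then `D = C` and `x`, `y` would be adjacent in the reduced graph.
  obtain ⟨z, hzC, hzS⟩ : ∃ z ∈ vBoundary G C, z ∉ S := by
    by_contra! hCS
    have hDC : D ⊆ C := subset_of_induce_preconnected hD.2.2.1 ⟨d, hd, hdC⟩
      fun a ha b hb hab => by_contra fun hbC => hD.2.1 hb (hCS b ⟨hbC, a, ha, hab.symm⟩)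
    have hyC : (y : V) ∈ vBoundary G C := hCD.antisymm hDC ▸ hy
    exact hS x y (hCS _ hxC) (hCS _ hyC) ⟨hxy, C, hC, hxC, hyC⟩
  have hzD : z ∈ D := by
    obtain ⟨-, c, hc, hzc⟩ := hzC
    exact hD.mem_of_adj (hCD hc) hzS hzc.symm
  refine ⟨hxD, ⟨z, hC.vBoundary_subset hzC⟩, hzD, fun h => ?_, C, hC, hxC, hzC⟩
  exact hxD (congrArg Subtype.val h ▸ hzD)

end ReducedGraph

section Fpow

variable {G : SimpleGraph V} {F : Set V} {ψ : G ≃g reducedGraph G F} {n : ℕ}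

theorem Fpow_one : Fpow G F ψ 1 = F := by
  ext v
  exact ⟨fun ⟨w, _, hw⟩ => hw ▸ (ψ w).2, fun hv => ⟨ψ.symm ⟨v, hv⟩, trivial, by simp⟩⟩

theorem Fpow_subset (hn : 1 ≤ n) : Fpow G F ψ n ⊆ F := by
  obtain ⟨m, rfl⟩ := Nat.exists_eq_add_of_le' hn
  rintro _ ⟨v, -, rfl⟩
  exact (ψ v).2

theorem preimage_Fpow_succ : ψ ⁻¹' (Subtype.val ⁻¹' Fpow G F ψ (n + 1)) = Fpow G F ψ n :=
  Set.preimage_image_eq _ (Subtype.val_injective.comp ψ.injective)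

theorem not_adj_of_mem_Fpow_succ (hF1 : AxiomF1 G F) (hn : 1 ≤ n) (a b : F)
    (ha : (a : V) ∈ Fpow G F ψ (n + 1)) (hb : (b : V) ∈ Fpow G F ψ (n + 1)) :
    ¬ (reducedGraph G F).Adj a b := by
  have hmem {c : F} (hc : (c : V) ∈ Fpow G F ψ (n + 1)) : ψ.symm c ∈ Fpow G F ψ n := by
    rw [← preimage_Fpow_succ]
    simpa using hc
  rw [← ψ.apply_symm_apply a, ← ψ.apply_symm_apply b, ψ.map_adj_iff]
  exact hF1 _ (Fpow_subset hn (hmem ha)) _ (Fpow_subset hn (hmem hb))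

end Fpow

theorem diam_boundary_ncell_general
    {V : Type*} (G : SimpleGraph V) (hconn : G.Connected)
    (F : Set V) (ψ : G ≃g reducedGraph G F)
    (hF1 : AxiomF1 G F)
    (ν : ℕ) (hH2 : AxiomH2 G F ν) :
    ∀ n : ℕ, 1 ≤ n → ∀ Cn : Set V, IsCellOf G (Fpow G F ψ n) Cn →
      ∀ x ∈ vBoundary G Cn, ∀ y ∈ vBoundary G Cn, x ≠ y →
        G.dist x y = ν ^ n := by
  intro n hn
  induction n, hn using Nat.le_induction with
  | base =>
    rw [Fpow_one, pow_one]
    exact hH2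
  | succ n hn ih =>
    intro D hD x hx y hy hxy
    have hSF : Fpow G F ψ (n + 1) ⊆ F := Fpow_subset (by omega)
    lift x to F using hSF (hD.vBoundary_subset hx)
    lift y to F using hSF (hD.vBoundary_subset hy)
    have hxy' : x ≠ y := fun h => hxy (congrArg Subtype.val h)
    have hS := not_adj_of_mem_Fpow_succ (ψ := ψ) hF1 hn
    have hxB := hD.mem_vBoundary_reducedGraph hF1 hSF hS hx hy hxy'
    have hyB := hD.mem_vBoundary_reducedGraph hF1 hSF hS hy hx hxy'.symm
    obtain ⟨-, c, hc, -⟩ := id hxB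
    have hE := (hD.toReducedGraph hF1 hSF ⟨c, hc⟩).preimage ψ
    rw [preimage_Fpow_succ] at hE
    have hdist := ih _ hE (ψ.symm x) ((mem_vBoundary_preimage ψ).2 (by simpa using hxB))
      (ψ.symm y) ((mem_vBoundary_preimage ψ).2 (by simpa using hyB)) (by simpa using hxy')
    calc G.dist x y = ν * (reducedGraph G F).dist x y :=
          dist_eq_mul_dist_reducedGraph hconn hF1 hH2 x y
      _ = ν * G.dist (ψ.symm x) (ψ.symm y) := by
          rw [← ψ.dist_eq, ψ.apply_symm_apply, ψ.apply_symm_apply]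
      _ = ν ^ (n + 1) := by rw [hdist, pow_succ, mul_comm]

/-- In a homogeneously self-similar graph with length scaling factor `ν`, the
diameter of the boundary of an n-cell is exactly `ν^n`: any two distinct
boundary vertices of an n-cell are at distance `ν^n`. -/
theorem diam_boundary_ncell
    {V : Type*} [Infinite V] (G : SimpleGraph V) (hconn : G.Connected)
    (F : Set V) (ψ : G ≃g reducedGraph G F)
    (hF1 : AxiomF1 G F) (hF2 : AxiomF2 G F) (hH1 : AxiomH1 G F)
    (ν : ℕ) (hν : 2 ≤ ν) (hH2 : AxiomH2 G F ν) :
    ∀ n : ℕ, 1 ≤ n → ∀ Cn : Set V, IsCellOf G (Fpow G F ψ n) Cn →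
      ∀ x ∈ vBoundary G Cn, ∀ y ∈ vBoundary G Cn, x ≠ y →
        G.dist x y = ν ^ n :=
  diam_boundary_ncell_general G hconn F ψ hF1 ν hH2
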